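/- arXiv:2504.04723 — 6 statements merged into one kernel-verified Lean document; each statement's English description precedes it below -/
import Mathlib

section
/- For every i, j, k ∈ {+1, −1}, the 4×4 complex matrix Π↑↓_{[i,j,k]} := (1/16)( 2 I⊗I + i(X⊗I − I⊗X) + j(Y⊗I − I⊗Y) + k(Z⊗I − I⊗Z) − ij(X⊗Y + Y⊗X) − jk(Y⊗Z + Z⊗Y) − ki(Z⊗X + X⊗Z) ) is positive semidefinite. -/
open Matrix Complex
open scoped Kronecker Matrix ComplexOrder

noncomputable section

/-- Pauli matrix σ_x. -/
def σx : Matrix (Fin 2) (Fin 2) ℂ := !![0, 1; 1, 0]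
/-- Pauli matrix σ_y. -/
def σy : Matrix (Fin 2) (Fin 2) ℂ := !![0, -Complex.I; Complex.I, 0]
/-- Pauli matrix σ_z. -/
def σz : Matrix (Fin 2) (Fin 2) ℂ := !![1, 0; 0, -1]

/-- The two-element set {+1, -1} of outcomes/signs. -/
def pm : Finset ℝ := {1, -1}

/-- Qubit state with Bloch vector m: ρ_m = (1/2)(I + m·σ). -/
def rho (m : Fin 3 → ℝ) : Matrix (Fin 2) (Fin 2) ℂ :=
  (2 : ℂ)⁻¹ • ((1 : Matrix (Fin 2) (Fin 2) ℂ) + (m 0 : ℂ) • σx + (m 1 : ℂ) • σy + (m 2 : ℂ) • σz)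

/-- The antiparallel-configuration effects Π↑↓_{[i,j,k]}. -/
def PiAnti (i j k : ℝ) : Matrix (Fin 2 × Fin 2) (Fin 2 × Fin 2) ℂ :=
  (16 : ℂ)⁻¹ • ((2 : ℂ) • (1 : Matrix (Fin 2 × Fin 2) (Fin 2 × Fin 2) ℂ)
    + (i : ℂ) • (σx ⊗ₖ (1 : Matrix (Fin 2) (Fin 2) ℂ) - (1 : Matrix (Fin 2) (Fin 2) ℂ) ⊗ₖ σx)
    + (j : ℂ) • (σy ⊗ₖ (1 : Matrix (Fin 2) (Fin 2) ℂ) - (1 : Matrix (Fin 2) (Fin 2) ℂ) ⊗ₖ σy)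
    + (k : ℂ) • (σz ⊗ₖ (1 : Matrix (Fin 2) (Fin 2) ℂ) - (1 : Matrix (Fin 2) (Fin 2) ℂ) ⊗ₖ σz)
    - ((i * j : ℝ) : ℂ) • (σx ⊗ₖ σy + σy ⊗ₖ σx)
    - ((j * k : ℝ) : ℂ) • (σy ⊗ₖ σz + σz ⊗ₖ σy)
    - ((k * i : ℝ) : ℂ) • (σz ⊗ₖ σx + σx ⊗ₖ σz))

/-- The GPT effects Π#_{[i,j,k]}. -/
def PiSharp (i j k : ℝ) : Matrix (Fin 2 × Fin 2) (Fin 2 × Fin 2) ℂ :=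
  (16 : ℂ)⁻¹ • ((2 : ℂ) • (1 : Matrix (Fin 2 × Fin 2) (Fin 2 × Fin 2) ℂ)
    + (i : ℂ) • (σx ⊗ₖ (1 : Matrix (Fin 2) (Fin 2) ℂ) + (1 : Matrix (Fin 2) (Fin 2) ℂ) ⊗ₖ σx)
    + (j : ℂ) • (σy ⊗ₖ (1 : Matrix (Fin 2) (Fin 2) ℂ) + (1 : Matrix (Fin 2) (Fin 2) ℂ) ⊗ₖ σy)
    + (k : ℂ) • (σz ⊗ₖ (1 : Matrix (Fin 2) (Fin 2) ℂ) + (1 : Matrix (Fin 2) (Fin 2) ℂ) ⊗ₖ σz)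
    + ((i * j : ℝ) : ℂ) • (σx ⊗ₖ σy + σy ⊗ₖ σx)
    + ((j * k : ℝ) : ℂ) • (σy ⊗ₖ σz + σz ⊗ₖ σy)
    + ((k * i : ℝ) : ℂ) • (σz ⊗ₖ σx + σx ⊗ₖ σz))

end

noncomputable section

/-- The parallel-configuration effects Π↑↑_{[i,j,k]} of Carmeli et al. -/
def PiPar (i j k : ℝ) : Matrix (Fin 2 × Fin 2) (Fin 2 × Fin 2) ℂ :=
  (32 : ℂ)⁻¹ • ((4 : ℂ) • (1 : Matrix (Fin 2 × Fin 2) (Fin 2 × Fin 2) ℂ)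
    + ((Real.sqrt 3 * i : ℝ) : ℂ) • (σx ⊗ₖ (1 : Matrix (Fin 2) (Fin 2) ℂ) + (1 : Matrix (Fin 2) (Fin 2) ℂ) ⊗ₖ σx)
    + ((Real.sqrt 3 * j : ℝ) : ℂ) • (σy ⊗ₖ (1 : Matrix (Fin 2) (Fin 2) ℂ) + (1 : Matrix (Fin 2) (Fin 2) ℂ) ⊗ₖ σy)
    + ((Real.sqrt 3 * k : ℝ) : ℂ) • (σz ⊗ₖ (1 : Matrix (Fin 2) (Fin 2) ℂ) + (1 : Matrix (Fin 2) (Fin 2) ℂ) ⊗ₖ σz)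
    + ((i * j : ℝ) : ℂ) • (σx ⊗ₖ σy + σy ⊗ₖ σx)
    + ((j * k : ℝ) : ℂ) • (σy ⊗ₖ σz + σz ⊗ₖ σy)
    + ((k * i : ℝ) : ℂ) • (σz ⊗ₖ σx + σx ⊗ₖ σz))

/-- The universal spin-flip (transformation) map F(A) = (Tr A)·I − A. -/
def Flip (A : Matrix (Fin 2) (Fin 2) ℂ) : Matrix (Fin 2) (Fin 2) ℂ :=
  A.trace • (1 : Matrix (Fin 2) (Fin 2) ℂ) - A

/-- The map id ⊗ Φ on M₂(ℂ) ⊗ M₂(ℂ), acting as A ⊗ B ↦ A ⊗ Φ(B) extended linearly. -/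
def idTensor (Φ : Matrix (Fin 2) (Fin 2) ℂ → Matrix (Fin 2) (Fin 2) ℂ)
    (M : Matrix (Fin 2 × Fin 2) (Fin 2 × Fin 2) ℂ) : Matrix (Fin 2 × Fin 2) (Fin 2 × Fin 2) ℂ :=
  Matrix.of fun p q => Φ (Matrix.of fun b d => M (p.1, b) (q.1, d)) p.2 q.2

/-- Choi matrix Σ_{k,l} E_{kl} ⊗ Λ(E_{kl}) of a linear map Λ on M₂(ℂ). -/
def Choi (Λ : Matrix (Fin 2) (Fin 2) ℂ →ₗ[ℂ] Matrix (Fin 2) (Fin 2) ℂ) :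
    Matrix (Fin 2 × Fin 2) (Fin 2 × Fin 2) ℂ :=
  ∑ k : Fin 2, ∑ l : Fin 2,
    (Matrix.single k l (1 : ℂ)) ⊗ₖ Λ (Matrix.single k l (1 : ℂ))

/-- Sign value of a Boolean outcome: true ↦ +1, false ↦ −1. -/
def sgn (b : Bool) : ℝ := if b then 1 else -1

/-- Unsharp spin effect P^a_{n̂,λ} = (1/2)(I + λ a n̂·σ). -/
def Peff (n : Fin 3 → ℝ) (lam a : ℝ) : Matrix (Fin 2) (Fin 2) ℂ :=
  (2 : ℂ)⁻¹ • ((1 : Matrix (Fin 2) (Fin 2) ℂ)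
    + ((lam * a * n 0 : ℝ) : ℂ) • σx + ((lam * a * n 1 : ℝ) : ℂ) • σy
    + ((lam * a * n 2 : ℝ) : ℂ) • σz)

/-- Computational basis vector |ab⟩ of ℂ²⊗ℂ². -/
def ket (a b : Fin 2) : Fin 2 × Fin 2 → ℂ := fun p => if p = (a, b) then 1 else 0

/-- Bell vector |φ⁺⟩. -/
def phiP : Fin 2 × Fin 2 → ℂ := ((Real.sqrt 2 : ℝ) : ℂ)⁻¹ • (ket 0 0 + ket 1 1)
/-- Bell vector |φ⁻⟩. -/
def phiM : Fin 2 × Fin 2 → ℂ := ((Real.sqrt 2 : ℝ) : ℂ)⁻¹ • (ket 0 0 - ket 1 1)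
/-- Bell vector |ψ⁺⟩. -/
def psiP : Fin 2 × Fin 2 → ℂ := ((Real.sqrt 2 : ℝ) : ℂ)⁻¹ • (ket 0 1 + ket 1 0)
/-- Bell vector |ψ⁻⟩. -/
def psiM : Fin 2 × Fin 2 → ℂ := ((Real.sqrt 2 : ℝ) : ℂ)⁻¹ • (ket 0 1 - ket 1 0)

/-- The vector |ξ_{[i,j,k]}⟩ = (1/2)(|ψ⁻⟩ − i|φ⁻⟩ + 𝐢 j|φ⁺⟩ + k|ψ⁺⟩). -/
def xi (i j k : ℝ) : Fin 2 × Fin 2 → ℂ :=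
  (2 : ℂ)⁻¹ • (psiM - (i : ℂ) • phiM + (Complex.I * (j : ℂ)) • phiP + (k : ℂ) • psiP)

end

/-! For signs i, j, k the effect Π↑↓_{[i,j,k]} has rank one: it is ½|ξ⟩⟨ξ| for the unit vector
ξ = ξ_{[i,j,k]}, hence positive semidefinite. Clearing the normalisation 1/(2√2) of ξ, the identity
is a polynomial identity in i, j, k entrywise, valid modulo i² = j² = k² = 1. -/

theorem sq_eq_one_of_mem_pm {s : ℝ} (hs : s ∈ pm) : s ^ 2 = 1 := by
  simp only [pm, Finset.mem_insert, Finset.mem_singleton] at hs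
  rcases hs with rfl | rfl <;> norm_num

theorem vecMulVec_ofReal_smul_self_star {n : Type*} (c : ℝ) (v : n → ℂ) :
    vecMulVec ((c : ℂ) • v) (star ((c : ℂ) • v)) = ((c ^ 2 : ℝ) : ℂ) • vecMulVec v (star v) := by
  rw [star_smul, Complex.star_def, Complex.conj_ofReal, smul_vecMulVec, vecMulVec_smul, smul_smul]
  push_cast
  ring_nf

def xiUnnormalized (i j k : ℝ) : Fin 2 × Fin 2 → ℂ :=
  (-(i : ℂ) + I * j) • ket 0 0 + (1 + (k : ℂ)) • ket 0 1 + ((k : ℂ) - 1) • ket 1 0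
    + ((i : ℂ) + I * j) • ket 1 1

theorem xi_eq_smul_xiUnnormalized (i j k : ℝ) :
    xi i j k = (((2 * √2)⁻¹ : ℝ) : ℂ) • xiUnnormalized i j k := by
  simp only [xi, psiM, phiM, phiP, psiP, xiUnnormalized]
  push_cast
  module

theorem piAnti_eq_vecMulVec_xiUnnormalized {i j k : ℝ} (hi : i ^ 2 = 1) (hj : j ^ 2 = 1)
    (hk : k ^ 2 = 1) :
    PiAnti i j k =
      (16 : ℂ)⁻¹ • vecMulVec (xiUnnormalized i j k) (star (xiUnnormalized i j k)) := by
  have hi' : (i : ℂ) ^ 2 = 1 := by exact_mod_cast hi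
  have hj' : (j : ℂ) ^ 2 = 1 := by exact_mod_cast hj
  have hk' : (k : ℂ) ^ 2 = 1 := by exact_mod_cast hk
  ext ⟨a, b⟩ ⟨c, d⟩
  fin_cases a <;> fin_cases b <;> fin_cases c <;> fin_cases d <;>
    simp [PiAnti, xiUnnormalized, ket, σx, σy, σz, vecMulVec_apply, kroneckerMap_apply,
      one_apply] <;>
    grind [Complex.I_sq]

theorem piAnti_eq_half_vecMulVec_xi {i j k : ℝ} (hi : i ^ 2 = 1) (hj : j ^ 2 = 1)
    (hk : k ^ 2 = 1) :
    PiAnti i j k = (2 : ℂ)⁻¹ • vecMulVec (xi i j k) (star (xi i j k)) := by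
  have hnorm : ((((2 * √2)⁻¹ : ℝ) ^ 2 : ℝ) : ℂ) = 8⁻¹ := by
    rw [inv_pow, mul_pow, Real.sq_sqrt zero_le_two]
    norm_num
  rw [xi_eq_smul_xiUnnormalized, vecMulVec_ofReal_smul_self_star, hnorm, smul_smul,
    piAnti_eq_vecMulVec_xiUnnormalized hi hj hk]
  norm_num

/-- each Π↑↓_{[i,j,k]} (i,j,k ∈ {±1}) is positive semidefinite. -/
theorem piAnti_posSemidef :
    ∀ i ∈ pm, ∀ j ∈ pm, ∀ k ∈ pm, (PiAnti i j k).PosSemidef := by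
  intro i hi j hj k hk
  rw [piAnti_eq_half_vecMulVec_xi (sq_eq_one_of_mem_pm hi) (sq_eq_one_of_mem_pm hj)
    (sq_eq_one_of_mem_pm hk)]
  exact (posSemidef_vecMulVec_self_star _).smul (inv_nonneg.mpr zero_le_two)
end

section
/- For every m = (m_x, m_y, m_z) ∈ ℝ³ with ‖m‖ ≤ 1, the marginals of the POVM {Π↑↓_{[i,j,k]}} on the antiparallel pair ρ_m ⊗ ρ_{−m} reproduce the statistics of the sharp spin observables X, Y, Z on ρ_m: for every i ∈ {+1,−1}, Σ_{j,k∈{±1}} Tr[ Π↑↓_{[i,j,k]} (ρ_m ⊗ ρ_{−m}) ] = (1/2)(1 + i·m_x); for every j ∈ {+1,−1}, Σ_{i,k∈{±1}} Tr[ Π↑↓_{[i,j,k]} (ρ_m ⊗ ρ_{−m}) ] = (1/2)(1 + j·m_y); and for every k ∈ {+1,−1}, Σ_{i,j∈{±1}} Tr[ Π↑↓_{[i,j,k]} (ρ_m ⊗ ρ_{−m}) ] = (1/2)(1 + k·m_z). -/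
open Matrix Complex
open scoped Kronecker Matrix ComplexOrder

/-! Since `Tr[(A ⊗ B)(ρ_m ⊗ ρ_n)] = Tr(A ρ_m) Tr(B ρ_n)` and `Tr(σ_a ρ_m) = m_a`, one gets
`Tr[Π↑↓_{[i,j,k]} (ρ_m ⊗ ρ_{-m})] = (1 + i m_x + j m_y + k m_z + ij m_x m_y + jk m_y m_z + ki m_z m_x) / 8`.
Summing over two of the signs `i, j, k ∈ {±1}` kills every term containing one of them. -/

theorem trace_kronecker_mul_kronecker {R m n : Type*} [CommSemiring R] [Fintype m] [Fintype n]
    (A C : Matrix m m R) (B D : Matrix n n R) :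
    ((A ⊗ₖ B) * (C ⊗ₖ D)).trace = (A * C).trace * (B * D).trace := by
  rw [← mul_kronecker_mul, trace_kronecker]

theorem rho_eq (m : Fin 3 → ℝ) :
    rho m = (2 : ℂ)⁻¹ • !![1 + (m 2 : ℂ), m 0 - m 1 * I; m 0 + m 1 * I, 1 - m 2] := by
  ext a b
  fin_cases a <;> fin_cases b <;> simp [rho, σx, σy, σz, sub_eq_add_neg]

theorem trace_rho (m : Fin 3 → ℝ) : (rho m).trace = 1 := by
  rw [rho_eq, trace_smul, trace_fin_two_of, smul_eq_mul]
  ring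

theorem trace_σx_mul_rho (m : Fin 3 → ℝ) : (σx * rho m).trace = m 0 := by
  rw [rho_eq, σx, mul_smul_comm, trace_smul, mul_fin_two, trace_fin_two_of, smul_eq_mul]
  ring

theorem trace_σy_mul_rho (m : Fin 3 → ℝ) : (σy * rho m).trace = m 1 := by
  rw [rho_eq, σy, mul_smul_comm, trace_smul, mul_fin_two, trace_fin_two_of, smul_eq_mul]
  linear_combination (-(m 1 : ℂ)) * I_sq

theorem trace_σz_mul_rho (m : Fin 3 → ℝ) : (σz * rho m).trace = m 2 := by
  rw [rho_eq, σz, mul_smul_comm, trace_smul, mul_fin_two, trace_fin_two_of, smul_eq_mul]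
  ring

theorem trace_piAnti_mul_rho_kronecker_rho (i j k : ℝ) (m n : Fin 3 → ℝ) :
    (PiAnti i j k * (rho m ⊗ₖ rho n)).trace = (16 : ℂ)⁻¹ * (2 + i * (m 0 - n 0) + j * (m 1 - n 1)
      + k * (m 2 - n 2) - ((i * j : ℝ) : ℂ) * (m 0 * n 1 + m 1 * n 0)
      - ((j * k : ℝ) : ℂ) * (m 1 * n 2 + m 2 * n 1) - ((k * i : ℝ) : ℂ) * (m 2 * n 0 + m 0 * n 2)) := by
  simp only [PiAnti, smul_mul_assoc, add_mul, sub_mul, one_mul, trace_smul, trace_add, trace_sub,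
    trace_kronecker, trace_kronecker_mul_kronecker, trace_rho, trace_σx_mul_rho, trace_σy_mul_rho,
    trace_σz_mul_rho, smul_eq_mul]
  ring

theorem sum_pm {M : Type*} [AddCommMonoid M] (f : ℝ → M) : ∑ x ∈ pm, f x = f 1 + f (-1) :=
  Finset.sum_pair (by norm_num)

theorem piAnti_marginals_general (m : Fin 3 → ℝ) :
    (∀ i ∈ pm, ∑ j ∈ pm, ∑ k ∈ pm, (PiAnti i j k * (rho m ⊗ₖ rho (-m))).trace
        = ((1 / 2 * (1 + i * m 0) : ℝ) : ℂ)) ∧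
    (∀ j ∈ pm, ∑ i ∈ pm, ∑ k ∈ pm, (PiAnti i j k * (rho m ⊗ₖ rho (-m))).trace
        = ((1 / 2 * (1 + j * m 1) : ℝ) : ℂ)) ∧
    (∀ k ∈ pm, ∑ i ∈ pm, ∑ j ∈ pm, (PiAnti i j k * (rho m ⊗ₖ rho (-m))).trace
        = ((1 / 2 * (1 + k * m 2) : ℝ) : ℂ)) := by
  simp only [sum_pm, trace_piAnti_mul_rho_kronecker_rho, Pi.neg_apply]
  simp only [pm, Finset.mem_insert, Finset.mem_singleton, forall_eq_or_imp, forall_eq]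
  push_cast
  refine ⟨⟨?_, ?_⟩, ⟨?_, ?_⟩, ⟨?_, ?_⟩⟩ <;> ring

/-- marginals of Π↑↓ on ρ_m ⊗ ρ_{−m} reproduce sharp X, Y, Z statistics. -/
theorem piAnti_marginals (m : Fin 3 → ℝ) (hm : m 0 ^ 2 + m 1 ^ 2 + m 2 ^ 2 ≤ 1) :
    (∀ i ∈ pm, ∑ j ∈ pm, ∑ k ∈ pm, (PiAnti i j k * (rho m ⊗ₖ rho (-m))).trace
        = ((1 / 2 * (1 + i * m 0) : ℝ) : ℂ)) ∧
    (∀ j ∈ pm, ∑ i ∈ pm, ∑ k ∈ pm, (PiAnti i j k * (rho m ⊗ₖ rho (-m))).trace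
        = ((1 / 2 * (1 + j * m 1) : ℝ) : ℂ)) ∧
    (∀ k ∈ pm, ∑ i ∈ pm, ∑ j ∈ pm, (PiAnti i j k * (rho m ⊗ₖ rho (-m))).trace
        = ((1 / 2 * (1 + k * m 2) : ℝ) : ℂ)) :=
  piAnti_marginals_general m
end

section
/- (Theorem 3) Let Λ : M₂(ℂ) → M₂(ℂ) be a completely positive trace-preserving linear map (i.e., trace preserving with positive semidefinite Choi matrix). Suppose a finite family of unsharp spin observables {σ_{n̂_j, λ'}}_{j=1}^N (with unit directions n̂_j ∈ ℝ³ and sharpness λ' ∈ [0,1]) is jointly measurable on the configuration ρ ⊗ Λ(ρ): there is a POVM {π_a}_{a ∈ {±1}^N} on ℂ²⊗ℂ² such that Tr[ρ_m P^{a_j}_{n̂_j,λ'}] = Σ_{a : a_j fixed} Tr[(ρ_m ⊗ Λ(ρ_m)) π_a] for all m with ‖m‖ ≤ 1 and all j, a_j. Then the same observables with the same sharpness λ' are jointly measurable on the parallel configuration: there is a POVM {π'_a} on ℂ²⊗ℂ² with Tr[ρ_m P^{a_j}_{n̂_j,λ'}] = Σ_{a : a_j fixed} Tr[(ρ_m ⊗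 ρ_m) π'_a] for all such m, j, a_j. -/
/-!
The Choi matrix of `Λ` is positive, so `Λ X = ∑ᵢ Kᵢ X Kᵢᴴ` for some Kraus operators `Kᵢ`, and
`id ⊗ Λ` has the Kraus operators `1 ⊗ Kᵢ`. Moving these onto the effects gives
`π'_a = ∑ᵢ (1 ⊗ Kᵢ)ᴴ π_a (1 ⊗ Kᵢ)`, with `Tr[(ρ ⊗ Λ ρ) π_a] = Tr[(ρ ⊗ ρ) π'_a]` for every `ρ`.
Each `π'_a` is positive termwise, and the `π'_a` sum to `1` because trace preservation of `Λ` is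
unitality of its dual `Y ↦ ∑ᵢ Kᵢᴴ Y Kᵢ`.
-/

open Matrix Complex
open scoped Kronecker Matrix ComplexOrder

section Kraus

variable {𝕜 ι m p q : Type*} [RCLike 𝕜] [Fintype ι] [Fintype q]

def krausMap (K : ι → Matrix p q 𝕜) : Matrix q q 𝕜 →ₗ[𝕜] Matrix p p 𝕜 where
  toFun X := ∑ i, K i * X * (K i)ᴴ
  map_add' X Y := by simp only [Matrix.mul_add, Matrix.add_mul, Finset.sum_add_distrib]
  map_smul' c X := by
    simp only [Matrix.mul_smul, Matrix.smul_mul, Finset.smul_sum, RingHom.id_apply]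

theorem krausMap_apply (K : ι → Matrix p q 𝕜) (X : Matrix q q 𝕜) :
    krausMap K X = ∑ i, K i * X * (K i)ᴴ := rfl

theorem krausMap_posSemidef [Finite p] (K : ι → Matrix p q 𝕜) {X : Matrix q q 𝕜}
    (hX : X.PosSemidef) : (krausMap K X).PosSemidef :=
  posSemidef_sum _ fun i _ => hX.mul_mul_conjTranspose_same (K i)

theorem trace_krausMap_mul [Fintype p] (K : ι → Matrix p q 𝕜) (X : Matrix q q 𝕜)
    (M : Matrix p p 𝕜) :
    (krausMap K X * M).trace = (X * krausMap (fun i => (K i)ᴴ) M).trace := by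
  simp only [krausMap_apply, conjTranspose_conjTranspose, Finset.sum_mul, Finset.mul_sum,
    trace_sum]
  refine Finset.sum_congr rfl fun i _ => ?_
  rw [Matrix.mul_assoc (K i * X), trace_mul_comm, ← Matrix.mul_assoc, trace_mul_comm]

theorem krausMap_conjTranspose_one_of_trace [Fintype p] [DecidableEq p] [DecidableEq q]
    {K : ι → Matrix p q 𝕜} (hK : ∀ X, (krausMap K X).trace = X.trace) :
    krausMap (fun i => (K i)ᴴ) 1 = 1 := by
  ext a b
  have h := trace_krausMap_mul K (single b a 1) 1
  rw [Matrix.mul_one, hK, trace_single_mul, one_smul] at h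
  rw [← h, one_apply]
  split_ifs with hab <;> simp [hab, trace, Ne.symm]

theorem kronecker_sum {n : Type*} (A : Matrix m m 𝕜) (B : ι → Matrix n n 𝕜) :
    A ⊗ₖ ∑ i, B i = ∑ i, A ⊗ₖ B i :=
  map_sum (kroneckerBilinear (R := 𝕜) (α := 𝕜) A) B Finset.univ

theorem kronecker_krausMap [Fintype m] [DecidableEq m] (A : Matrix m m 𝕜)
    (K : ι → Matrix p q 𝕜) (B : Matrix q q 𝕜) :
    A ⊗ₖ krausMap K B = krausMap (fun i => (1 : Matrix m m 𝕜) ⊗ₖ K i) (A ⊗ₖ B) := by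
  rw [krausMap_apply, krausMap_apply, kronecker_sum]
  refine Finset.sum_congr rfl fun i _ => ?_
  rw [conjTranspose_kronecker, conjTranspose_one,
    ← mul_kronecker_mul, ← mul_kronecker_mul, Matrix.one_mul, Matrix.mul_one]

end Kraus

section Choi

variable (Λ : Matrix (Fin 2) (Fin 2) ℂ →ₗ[ℂ] Matrix (Fin 2) (Fin 2) ℂ)

theorem Choi_apply (k l a c : Fin 2) :
    Choi Λ (k, a) (l, c) = Λ (single k l 1) a c := by
  fin_cases k <;> fin_cases l <;>
    simp [Choi, Matrix.sum_apply, Fin.sum_univ_two, single]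

theorem apply_eq_sum_Choi (X : Matrix (Fin 2) (Fin 2) ℂ) (a c : Fin 2) :
    Λ X a c = ∑ k, ∑ l, X k l * Choi Λ (k, a) (l, c) := by
  conv_lhs => rw [matrix_eq_sum_single X]
  simp only [map_sum, Matrix.sum_apply, Choi_apply]
  refine Finset.sum_congr rfl fun k _ => Finset.sum_congr rfl fun l _ => ?_
  rw [show single k l (X k l) = X k l • single k l 1 by rw [smul_single, smul_eq_mul, mul_one],
    map_smul, Matrix.smul_apply, smul_eq_mul]

theorem exists_eq_krausMap_of_posSemidef_Choi (hCP : (Choi Λ).PosSemidef) :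
    ∃ (r : ℕ) (K : Fin r → Matrix (Fin 2) (Fin 2) ℂ), Λ = krausMap K := by
  obtain ⟨r, v, hv⟩ := posSemidef_iff_eq_sum_vecMulVec.mp hCP
  refine ⟨r, fun i => of fun a k => v i (k, a), LinearMap.ext fun X => ?_⟩
  ext a c
  rw [apply_eq_sum_Choi, hv, krausMap_apply]
  simp only [Matrix.sum_apply, vecMulVec_apply, mul_apply, of_apply, conjTranspose_apply,
    Pi.star_apply, Finset.mul_sum, Fin.sum_univ_two, ← Finset.sum_add_distrib]
  exact Finset.sum_congr rfl fun i _ => by ring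

end Choi

theorem cptp_config_no_advantage_general
    (Λ : Matrix (Fin 2) (Fin 2) ℂ →ₗ[ℂ] Matrix (Fin 2) (Fin 2) ℂ)
    (hCP : (Choi Λ).PosSemidef) (hTP : ∀ A, (Λ A).trace = A.trace)
    (N : ℕ) (n : Fin N → (Fin 3 → ℝ))
    (lam : ℝ)
    (π : (Fin N → Bool) → Matrix (Fin 2 × Fin 2) (Fin 2 × Fin 2) ℂ)
    (hpos : ∀ a, (π a).PosSemidef) (hsum : ∑ a, π a = 1)
    (hmarg : ∀ m : Fin 3 → ℝ, m 0 ^ 2 + m 1 ^ 2 + m 2 ^ 2 ≤ 1 →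
      ∀ (j : Fin N) (b : Bool),
        (rho m * Peff (n j) lam (sgn b)).trace
          = ∑ a ∈ Finset.univ.filter (fun a : Fin N → Bool => a j = b),
              ((rho m ⊗ₖ Λ (rho m)) * π a).trace) :
    ∃ π' : (Fin N → Bool) → Matrix (Fin 2 × Fin 2) (Fin 2 × Fin 2) ℂ,
      (∀ a, (π' a).PosSemidef) ∧ (∑ a, π' a = 1) ∧
      ∀ m : Fin 3 → ℝ, m 0 ^ 2 + m 1 ^ 2 + m 2 ^ 2 ≤ 1 →
        ∀ (j : Fin N) (b : Bool),
          (rho m * Peff (n j) lam (sgn b)).trace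
            = ∑ a ∈ Finset.univ.filter (fun a : Fin N → Bool => a j = b),
                ((rho m ⊗ₖ rho m) * π' a).trace := by
  obtain ⟨r, K, rfl⟩ := exists_eq_krausMap_of_posSemidef_Choi Λ hCP
  let L : Fin r → Matrix (Fin 2 × Fin 2) (Fin 2 × Fin 2) ℂ := fun i => (1 ⊗ₖ K i)ᴴ
  refine ⟨fun a => krausMap L (π a), fun a => krausMap_posSemidef L (hpos a), ?_, ?_⟩
  · rw [← map_sum, hsum, ← one_kronecker_one]
    simp only [L, conjTranspose_kronecker, conjTranspose_one]
    rw [← kronecker_krausMap, krausMap_conjTranspose_one_of_trace hTP]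
  · intro m hm j b
    rw [hmarg m hm j b]
    refine Finset.sum_congr rfl fun a _ => ?_
    rw [kronecker_krausMap, trace_krausMap_mul]

/-- Theorem 3: if a family of unsharp spin observables is jointly
measurable on the configuration ρ ⊗ Λ(ρ) for a CPTP map Λ, then it is jointly
measurable (with the same sharpness) on the parallel configuration ρ ⊗ ρ. -/
theorem cptp_config_no_advantage
    (Λ : Matrix (Fin 2) (Fin 2) ℂ →ₗ[ℂ] Matrix (Fin 2) (Fin 2) ℂ)
    (hCP : (Choi Λ).PosSemidef) (hTP : ∀ A, (Λ A).trace = A.trace)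
    (N : ℕ) (n : Fin N → (Fin 3 → ℝ))
    (hn : ∀ j, (n j 0) ^ 2 + (n j 1) ^ 2 + (n j 2) ^ 2 = 1)
    (lam : ℝ) (hlam : lam ∈ Set.Icc (0 : ℝ) 1)
    (π : (Fin N → Bool) → Matrix (Fin 2 × Fin 2) (Fin 2 × Fin 2) ℂ)
    (hpos : ∀ a, (π a).PosSemidef) (hsum : ∑ a, π a = 1)
    (hmarg : ∀ m : Fin 3 → ℝ, m 0 ^ 2 + m 1 ^ 2 + m 2 ^ 2 ≤ 1 →
      ∀ (j : Fin N) (b : Bool),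
        (rho m * Peff (n j) lam (sgn b)).trace
          = ∑ a ∈ Finset.univ.filter (fun a : Fin N → Bool => a j = b),
              ((rho m ⊗ₖ Λ (rho m)) * π a).trace) :
    ∃ π' : (Fin N → Bool) → Matrix (Fin 2 × Fin 2) (Fin 2 × Fin 2) ℂ,
      (∀ a, (π' a).PosSemidef) ∧ (∑ a, π' a = 1) ∧
      ∀ m : Fin 3 → ℝ, m 0 ^ 2 + m 1 ^ 2 + m 2 ^ 2 ≤ 1 →
        ∀ (j : Fin N) (b : Bool),
          (rho m * Peff (n j) lam (sgn b)).trace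
            = ∑ a ∈ Finset.univ.filter (fun a : Fin N → Bool => a j = b),
                ((rho m ⊗ₖ rho m) * π' a).trace :=
  cptp_config_no_advantage_general Λ hCP hTP N n lam π hpos hsum hmarg
end

section
/- (Appendix I orthogonality) For (i,j,k), (i',j',k') ∈ {+1,−1}³, the vectors |ξ_{[i,j,k]}⟩ := (1/2)( |ψ⁻⟩ − i|φ⁻⟩ + 𝐢 j|φ⁺⟩ + k|ψ⁺⟩ ) satisfy: ⟨ξ_{[i,j,k]} | ξ_{[i',j',k']}⟩ = 0 if and only if the triples (i,j,k) and (i',j',k') differ in exactly two of their three coordinates (equivalently, ii' + jj' + kk' = −1). -/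
open Matrix Complex
open scoped Kronecker Matrix ComplexOrder

/-! In the orthonormal Bell basis `(ψ⁻, φ⁻, φ⁺, ψ⁺)` the vector `ξ_{[i,j,k]}` has coordinates
`(1, -i, 𝐢 j, k) / 2`, so `⟨ξ_{[i,j,k]} | ξ_{[i',j',k']}⟩ = (1 + i i' + j j' + k k') / 4`. -/

lemma star_xi_dotProduct_xi (i j k i' j' k' : ℝ) :
    star (xi i j k) ⬝ᵥ xi i' j' k' = ((1 + i * i' + j * j' + k * k' : ℝ) : ℂ) / 4 := by
  have hsqrt : ((Real.sqrt 2 : ℝ) : ℂ) ^ 2 = 2 := by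
    rw [← Complex.ofReal_pow, Real.sq_sqrt zero_le_two]; norm_num
  simp only [xi, psiM, phiM, phiP, psiP, ket, dotProduct, Fintype.sum_prod_type, Fin.sum_univ_two,
    Pi.star_apply, Pi.smul_apply, Pi.add_apply, Pi.sub_apply, smul_eq_mul, Prod.mk.injEq]
  simp only [Fin.isValue, zero_ne_one, and_false, ↓reduceIte, and_true, sub_self, mul_zero, and_self,
    sub_zero, mul_one, zero_sub, add_zero, star_mul', star_inv₀, star_ofNat, star_add, star_neg,
    RCLike.star_def, conj_ofReal, conj_I, neg_mul, one_ne_zero, mul_neg, zero_add, sub_neg_eq_add,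
    ofReal_add, ofReal_one, ofReal_mul]
  field_simp
  linear_combination (-4 * (1 + i * i' + j * j' + k * k') : ℂ) * hsqrt - (8 * j * j' : ℂ) * I_sq

/-- Appendix I orthogonality: ⟨ξ_{[i,j,k]} | ξ_{[i',j',k']}⟩ = 0
iff the sign triples differ in exactly two coordinates, i.e. ii' + jj' + kk' = −1. -/
theorem xi_orthogonality :
    ∀ i ∈ pm, ∀ j ∈ pm, ∀ k ∈ pm, ∀ i' ∈ pm, ∀ j' ∈ pm, ∀ k' ∈ pm,
      (star (xi i j k) ⬝ᵥ xi i' j' k' = 0 ↔ i * i' + j * j' + k * k' = -1) := by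
  intro i _ j _ k _ i' _ j' _ k' _
  rw [star_xi_dotProduct_xi, div_eq_zero_iff, or_iff_left four_ne_zero, Complex.ofReal_eq_zero]
  constructor <;> intro h <;> linarith
end

section
/- (Appendix II positivity) For every i, j, k ∈ {+1, −1} and every s = (s_x, s_y, s_z) ∈ ℝ³ with s_x² + s_y² + s_z² ≤ 1, the 2×2 Hermitian matrix (1/32)[ (2 − i s_x − j s_y − k s_z) I + i(1 − j s_y − k s_z) X + j(1 − k s_z − i s_x) Y + k(1 − i s_x − j s_y) Z ] is positive semidefinite. -/
open Matrix Complex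
open scoped Kronecker Matrix ComplexOrder

/-!
If `H` is Hermitian with `H * H = s • 1`, then for `α > 0`
`α • 1 + H = (2α)⁻¹ • ((α • 1 + H)ᴴ * (α • 1 + H) + (α² - s) • 1)`,
which is positive semidefinite as soon as `s ≤ α²`. The Pauli combination `a σx + b σy + c σz`
squares to `(a² + b² + c²) • 1`, and for the coefficients at hand, with `u = i s_x`, `v = j s_y`,
`w = k s_z`, one has `α = 2 - u - v - w > 0` (as `u + v + w ≤ √3`) and
`α² - (a² + b² + c²) = 1 - (u² + v² + w²) ≥ 0`.
-/

theorem Matrix.posSemidef_smul_one_add_of_mul_self_eq {𝕜 n : Type*} [RCLike 𝕜] [Fintype n]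
    [DecidableEq n] {H : Matrix n n 𝕜} {α s : ℝ} (hH : H.IsHermitian)
    (hsq : H * H = s • (1 : Matrix n n 𝕜)) (hα : 0 < α) (hs : s ≤ α ^ 2) :
    (α • (1 : Matrix n n 𝕜) + H).PosSemidef := by
  have key : α • (1 : Matrix n n 𝕜) + H =
      (2 * α)⁻¹ • ((α • 1 + H)ᴴ * (α • 1 + H) + (α ^ 2 - s) • (1 : Matrix n n 𝕜)) := by
    rw [conjTranspose_add, conjTranspose_smul, conjTranspose_one, hH.eq, star_trivial]
    simp only [add_mul, mul_add, Matrix.one_mul, Matrix.mul_one, smul_mul_assoc, mul_smul_comm,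
      hsq]
    match_scalars <;> field_simp <;> ring
  rw [key]
  exact ((posSemidef_conjTranspose_mul_self _).add (PosSemidef.one.smul (sub_nonneg.2 hs))).smul
    (inv_nonneg.2 (by positivity))

theorem isHermitian_pauli_comb (a b c : ℝ) :
    ((a : ℂ) • σx + (b : ℂ) • σy + (c : ℂ) • σz).IsHermitian := by
  ext i j
  fin_cases i <;> fin_cases j <;> simp [σx, σy, σz]

theorem pauli_comb_mul_self (a b c : ℝ) :
    ((a : ℂ) • σx + (b : ℂ) • σy + (c : ℂ) • σz) * ((a : ℂ) • σx + (b : ℂ) • σy + (c : ℂ) • σz)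
      = (a ^ 2 + b ^ 2 + c ^ 2) • (1 : Matrix (Fin 2) (Fin 2) ℂ) := by
  ext i j
  fin_cases i <;> fin_cases j <;> simp [σx, σy, σz, Matrix.mul_apply, Fin.sum_univ_two] <;>
    ring_nf <;> simp [I_sq]

theorem posSemidef_smul_one_add_pauli_comb {α a b c : ℝ} (hα : 0 < α)
    (h : a ^ 2 + b ^ 2 + c ^ 2 ≤ α ^ 2) :
    ((α : ℂ) • (1 : Matrix (Fin 2) (Fin 2) ℂ) + (a : ℂ) • σx + (b : ℂ) • σy + (c : ℂ) • σz)
      |>.PosSemidef := by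
  simpa only [add_assoc, Complex.coe_smul] using
    posSemidef_smul_one_add_of_mul_self_eq (isHermitian_pauli_comb a b c)
      (pauli_comb_mul_self a b c) hα h

theorem add_add_lt_two_of_sq_add_sq_add_sq_le_one {u v w : ℝ} (h : u ^ 2 + v ^ 2 + w ^ 2 ≤ 1) :
    u + v + w < 2 := by
  nlinarith [sq_nonneg (u - v), sq_nonneg (v - w), sq_nonneg (w - u)]

theorem sq_two_sub_sub_sum_sq_one_sub (u v w : ℝ) :
    (2 - u - v - w) ^ 2 - ((1 - v - w) ^ 2 + (1 - w - u) ^ 2 + (1 - u - v) ^ 2)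
      = 1 - (u ^ 2 + v ^ 2 + w ^ 2) := by
  ring

theorem sq_eq_one_of_mem_pm_s16 {x : ℝ} (hx : x ∈ pm) : x ^ 2 = 1 := by
  simp only [pm, Finset.mem_insert, Finset.mem_singleton] at hx
  rcases hx with rfl | rfl <;> norm_num

/-- Appendix II: positivity of the 2×2 operators arising from the
map Λ_{[i,j,k]} applied to an arbitrary qubit state ρ_s. -/
theorem appendixII_posSemidef :
    ∀ i ∈ pm, ∀ j ∈ pm, ∀ k ∈ pm, ∀ s : Fin 3 → ℝ,
      s 0 ^ 2 + s 1 ^ 2 + s 2 ^ 2 ≤ 1 →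
      (((32 : ℂ)⁻¹ • (((2 - i * s 0 - j * s 1 - k * s 2 : ℝ) : ℂ) • (1 : Matrix (Fin 2) (Fin 2) ℂ)
        + ((i * (1 - j * s 1 - k * s 2) : ℝ) : ℂ) • σx
        + ((j * (1 - k * s 2 - i * s 0) : ℝ) : ℂ) • σy
        + ((k * (1 - i * s 0 - j * s 1) : ℝ) : ℂ) • σz)) :
          Matrix (Fin 2) (Fin 2) ℂ).PosSemidef := by
  intro i hi j hj k hk s hs
  have hi2 := sq_eq_one_of_mem_pm_s16 hi
  have hj2 := sq_eq_one_of_mem_pm_s16 hj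
  have hk2 := sq_eq_one_of_mem_pm_s16 hk
  have hu : (i * s 0) ^ 2 + (j * s 1) ^ 2 + (k * s 2) ^ 2 ≤ 1 := by
    simpa only [mul_pow, hi2, hj2, hk2, one_mul] using hs
  have hα : 0 < 2 - i * s 0 - j * s 1 - k * s 2 := by
    linarith [add_add_lt_two_of_sq_add_sq_add_sq_le_one hu]
  refine (posSemidef_smul_one_add_pauli_comb hα ?_).smul (inv_nonneg.2 (by norm_num))
  simp only [mul_pow, hi2, hj2, hk2, one_mul]
  linarith [sq_two_sub_sub_sum_sq_one_sub (i * s 0) (j * s 1) (k * s 2)]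
end

section
/- There is no POVM on two parallel copies that reproduces the sharp spin statistics along all three orthogonal directions: there exists no family {π_{[i,j,k]}}_{i,j,k∈{±1}} of positive semidefinite 4×4 complex matrices with Σ_{i,j,k} π_{[i,j,k]} = I⊗I such that for every m ∈ ℝ³ with ‖m‖ = 1: Σ_{j,k} Tr[π_{[i,j,k]} (ρ_m ⊗ ρ_m)] = (1/2)(1 + i·m_x) for each i ∈ {±1}, Σ_{i,k} Tr[π_{[i,j,k]} (ρ_m ⊗ ρ_m)] = (1/2)(1 + j·m_y) for each j ∈ {±1}, and Σ_{i,j} Tr[π_{[i,j,k]} (ρ_m ⊗ ρ_m)] = (1/2)(1 + k·m_z) for each k ∈ {±1}. -/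
open Matrix Complex
open scoped Kronecker Matrix ComplexOrder

/-! For each outcome `i` along `x`, the product state with Bloch vector `-i eₓ` gives `i`
probability zero, so every effect `π i j k` annihilates `|-i⟩ₓ ⊗ |-i⟩ₓ`; likewise `π i j k`
annihilates `|-j⟩_y ⊗ |-j⟩_y`, and `π i j 1` annihilates `|11⟩`. Both symmetric product vectors
have the form `(|00⟩ + w(|01⟩ + |10⟩) + w²|11⟩)/2`, with `w² = 1` and `w² = -1` respectively, so
`|00⟩` lies in the span of the three annihilated vectors. Hence the outcome `k = 1` would have
probability zero in the state `|0⟩ ⊗ |0⟩`, where it must be certain. -/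

theorem Matrix.trace_mul_vecMulVec_star {n R : Type*} [Fintype n] [CommSemiring R] [StarRing R]
    (M : Matrix n n R) (v : n → R) :
    (M * vecMulVec v (star v)).trace = star v ⬝ᵥ M *ᵥ v := by
  rw [mul_vecMulVec, trace_vecMulVec, dotProduct_comm]

theorem Matrix.PosSemidef.mulVec_eq_zero_of_sum_sum_trace_eq_zero {n ι κ 𝕜 : Type*} [Fintype n]
    [RCLike 𝕜] {s : Finset ι} {t : Finset κ} {M : ι → κ → Matrix n n 𝕜}
    (hM : ∀ a ∈ s, ∀ b ∈ t, (M a b).PosSemidef) {v : n → 𝕜}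
    (h : ∑ a ∈ s, ∑ b ∈ t, (M a b * vecMulVec v (star v)).trace = 0) :
    ∀ a ∈ s, ∀ b ∈ t, M a b *ᵥ v = 0 := by
  have hnonneg : ∀ a ∈ s, ∀ b ∈ t, 0 ≤ star v ⬝ᵥ M a b *ᵥ v := fun a ha b hb =>
    (hM a ha b hb).dotProduct_mulVec_nonneg v
  simp only [trace_mul_vecMulVec_star] at h
  rw [Finset.sum_eq_zero_iff_of_nonneg fun a ha => Finset.sum_nonneg (hnonneg a ha)] at h
  intro a ha b hb
  exact (hM a ha b hb).dotProduct_mulVec_zero_iff v |>.mp <|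
    (Finset.sum_eq_zero_iff_of_nonneg (hnonneg a ha)).mp (h a ha) b hb

theorem rho_eq_matrix (m : Fin 3 → ℝ) :
    rho m = !![(1 + (m 2 : ℂ)) / 2, ((m 0 : ℂ) - I * (m 1 : ℂ)) / 2;
               ((m 0 : ℂ) + I * (m 1 : ℂ)) / 2, (1 - (m 2 : ℂ)) / 2] := by
  ext a b
  fin_cases a <;> fin_cases b <;> simp [rho, σx, σy, σz] <;> ring

theorem sq_sum_of_equator {z : ℂ} (hz : normSq z = 1) :
    (![z.re, z.im, 0] : Fin 3 → ℝ) 0 ^ 2 + (![z.re, z.im, 0] : Fin 3 → ℝ) 1 ^ 2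
      + (![z.re, z.im, 0] : Fin 3 → ℝ) 2 ^ 2 = 1 := by
  simpa [normSq_apply, sq] using hz

theorem rho_of_equator {z : ℂ} (hz : normSq z = 1) :
    rho ![z.re, z.im, 0] = (2 : ℂ)⁻¹ • vecMulVec ![1, z] (star ![1, z]) := by
  rw [rho_eq_matrix]
  ext a b
  simp only [Matrix.smul_apply, vecMulVec_apply, Pi.star_apply]
  rw [normSq_apply] at hz
  fin_cases a <;> fin_cases b <;> simp [Complex.ext_iff] <;> constructor <;> linarith

noncomputable def twinKet (z : ℂ) : Fin 2 × Fin 2 → ℂ := fun p => 2⁻¹ * (![1, z] p.1 * ![1, z] p.2)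

theorem rho_kron_rho_of_equator {z : ℂ} (hz : normSq z = 1) :
    rho ![z.re, z.im, 0] ⊗ₖ rho ![z.re, z.im, 0] = vecMulVec (twinKet z) (star (twinKet z)) := by
  rw [rho_of_equator hz]
  ext ⟨a, b⟩ ⟨c, d⟩
  simp only [kroneckerMap_apply, Matrix.smul_apply, vecMulVec_apply, twinKet, Pi.star_apply,
    star_mul', smul_eq_mul, star_inv₀, star_ofNat]
  ring

theorem rho_kron_rho_north :
    rho ![0, 0, 1] ⊗ₖ rho ![0, 0, 1] = vecMulVec (ket 0 0) (star (ket 0 0)) := by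
  rw [rho_eq_matrix]
  ext ⟨a, b⟩ ⟨c, d⟩
  fin_cases a <;> fin_cases b <;> fin_cases c <;> fin_cases d <;> simp [ket, vecMulVec_apply]

theorem rho_kron_rho_south :
    rho ![0, 0, -1] ⊗ₖ rho ![0, 0, -1] = vecMulVec (ket 1 1) (star (ket 1 1)) := by
  rw [rho_eq_matrix]
  ext ⟨a, b⟩ ⟨c, d⟩
  fin_cases a <;> fin_cases b <;> fin_cases c <;> fin_cases d <;> simp [ket, vecMulVec_apply]

theorem ket_zero_zero_eq {i j : ℝ} (hi : i * i = 1) (hj : j * j = 1) :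
    ket 0 0 = (1 - I * (i * j)) • twinKet (-i) + (1 + I * (i * j)) • twinKet (-(I * j))
      + (I * (i * j)) • ket 1 1 := by
  have hi' : (i : ℂ) * i = 1 := by exact_mod_cast hi
  have hj' : (j : ℂ) * j = 1 := by exact_mod_cast hj
  funext ⟨a, b⟩
  fin_cases a <;> fin_cases b <;> simp [twinKet, ket, Prod.ext_iff] <;> grind [I_mul_I]

theorem mul_self_eq_one_of_mem_pm {x : ℝ} (hx : x ∈ pm) : x * x = 1 := by
  rcases (by simpa [pm] using hx : x = 1 ∨ x = -1) with rfl | rfl <;> norm_num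

/-- no POVM on two parallel copies reproduces the sharp spin
statistics along all three orthogonal directions for all pure states. -/
theorem no_sharp_parallel_povm :
    ¬ ∃ π : ℝ → ℝ → ℝ → Matrix (Fin 2 × Fin 2) (Fin 2 × Fin 2) ℂ,
      (∀ i ∈ pm, ∀ j ∈ pm, ∀ k ∈ pm, (π i j k).PosSemidef) ∧
      (∑ i ∈ pm, ∑ j ∈ pm, ∑ k ∈ pm, π i j k = 1) ∧
      ∀ m : Fin 3 → ℝ, m 0 ^ 2 + m 1 ^ 2 + m 2 ^ 2 = 1 →
        (∀ i ∈ pm, ∑ j ∈ pm, ∑ k ∈ pm, (π i j k * (rho m ⊗ₖ rho m)).trace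
            = ((1 / 2 * (1 + i * m 0) : ℝ) : ℂ)) ∧
        (∀ j ∈ pm, ∑ i ∈ pm, ∑ k ∈ pm, (π i j k * (rho m ⊗ₖ rho m)).trace
            = ((1 / 2 * (1 + j * m 1) : ℝ) : ℂ)) ∧
        (∀ k ∈ pm, ∑ i ∈ pm, ∑ j ∈ pm, (π i j k * (rho m ⊗ₖ rho m)).trace
            = ((1 / 2 * (1 + k * m 2) : ℝ) : ℂ)) := by
  rintro ⟨π, hπ, -, hstat⟩
  have one_mem : (1 : ℝ) ∈ pm := by simp [pm]
  have killX : ∀ i ∈ pm, ∀ j ∈ pm, ∀ k ∈ pm, π i j k *ᵥ twinKet (-i) = 0 := by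
    intro i hi
    have hz : normSq (-i : ℂ) = 1 := by simpa using mul_self_eq_one_of_mem_pm hi
    have h := (hstat _ (sq_sum_of_equator hz)).1 i hi
    rw [rho_kron_rho_of_equator hz] at h
    refine PosSemidef.mulVec_eq_zero_of_sum_sum_trace_eq_zero (hπ i hi) (h.trans ?_)
    simp [mul_self_eq_one_of_mem_pm hi]
  have killY : ∀ i ∈ pm, ∀ j ∈ pm, ∀ k ∈ pm, π i j k *ᵥ twinKet (-(I * j)) = 0 := by
    intro i hi j hj
    have hz : normSq (-(I * j)) = 1 := by simpa using mul_self_eq_one_of_mem_pm hj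
    have h := (hstat _ (sq_sum_of_equator hz)).2.1 j hj
    rw [rho_kron_rho_of_equator hz] at h
    refine PosSemidef.mulVec_eq_zero_of_sum_sum_trace_eq_zero
      (fun a ha b hb => hπ a ha j hj b hb) (h.trans ?_) i hi
    simp [mul_self_eq_one_of_mem_pm hj]
  have killZ : ∀ i ∈ pm, ∀ j ∈ pm, π i j 1 *ᵥ ket 1 1 = 0 := by
    have h := (hstat ![0, 0, -1] (by simp)).2.2 1 one_mem
    rw [rho_kron_rho_south] at h
    exact PosSemidef.mulVec_eq_zero_of_sum_sum_trace_eq_zero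
      (fun a ha b hb => hπ a ha b hb 1 one_mem) (h.trans (by simp))
  have kill00 : ∀ i ∈ pm, ∀ j ∈ pm, π i j 1 *ᵥ ket 0 0 = 0 := by
    intro i hi j hj
    rw [ket_zero_zero_eq (mul_self_eq_one_of_mem_pm hi) (mul_self_eq_one_of_mem_pm hj)]
    simp only [mulVec_add, mulVec_smul, killX i hi j hj 1 one_mem, killY i hi j hj 1 one_mem,
      killZ i hi j hj, smul_zero, add_zero]
  have h := (hstat ![0, 0, 1] (by simp)).2.2 1 one_mem
  rw [rho_kron_rho_north, Finset.sum_congr rfl fun i hi => Finset.sum_congr rfl fun j hj => by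
    rw [trace_mul_vecMulVec_star, kill00 i hi j hj, dotProduct_zero]] at h
  simp at h
end
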